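/- arXiv:2605.13401 — 9 statements merged into one kernel-verified Lean document; each statement's English description precedes it below -/
import Mathlib

section
/- Let γ ∈ (0,1), s_W ∈ ℝ^m, and let s_0, s_1, …, s_n ∈ ℝ^m be a distance-improving sequence, i.e. ‖s_{k+1} − s_W‖ < ‖s_k − s_W‖ for all 0 ≤ k < n. For each index i define G_i := −∑_{k=i+1}^{n} γ^{k−i−1}·‖s_k − s_W‖. Then for all indices i < j ≤ n one has γ·G_j − G_i ≥ ‖s_j − s_W‖. -/
/-!
Write `d t = ‖s t - s_W‖` and `G` for the returns. Peeling off the first reward gives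
`G i = γ G (i+1) - d (i+1)`, so the claim for `j = i + 1` is an equality and it suffices to show
that `G` is nondecreasing on `0, …, n`. By the recursion this amounts to `(γ - 1) G t ≤ d t`,
which follows from summation by parts since `d` decreases along the sequence.
-/

open Finset

noncomputable def discountedReturn (γ : ℝ) (r : ℕ → ℝ) (n i : ℕ) : ℝ :=
  -∑ k ∈ range (n - i), γ ^ k * r (i + 1 + k)

section DiscountedReturn

variable {γ : ℝ} {r : ℕ → ℝ} {n i : ℕ}

theorem discountedReturn_eq_of_lt (h : i < n) :
    discountedReturn γ r n i = γ * discountedReturn γ r n (i + 1) - r (i + 1) := by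
  obtain ⟨N, hN⟩ : ∃ N, n - i = N + 1 := ⟨n - (i + 1), by omega⟩
  have hN' : n - (i + 1) = N := by omega
  have hterm (k : ℕ) : γ ^ (k + 1) * r (i + 1 + (k + 1)) = γ * (γ ^ k * r (i + 1 + 1 + k)) := by
    rw [show i + 1 + (k + 1) = i + 1 + 1 + k by omega]; ring
  rw [discountedReturn, discountedReturn, hN, hN', sum_range_succ']
  simp only [hterm, ← mul_sum]
  ring

theorem one_sub_mul_sum_pow_mul_le (hγ : 0 ≤ γ) (N : ℕ) (hr : ∀ k < i + N, r (k + 1) ≤ r k) :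
    (1 - γ) * ∑ k ∈ range N, γ ^ k * r (i + 1 + k) ≤ r i - γ ^ N * r (i + N) := by
  induction N with
  | zero => simp
  | succ N ih =>
    have hstep : r (i + N + 1) ≤ r (i + N) := hr _ (by omega)
    have hshift : i + 1 + N = i + N + 1 := by omega
    rw [sum_range_succ, hshift, ← add_assoc, pow_succ]
    nlinarith [ih fun k hk => hr k (by omega), mul_le_mul_of_nonneg_left hstep (pow_nonneg hγ N)]

theorem sub_one_mul_discountedReturn_le (hγ : 0 ≤ γ) (hr : ∀ k < n, r (k + 1) ≤ r k)
    (hrn : 0 ≤ r n) (hi : i ≤ n) : (γ - 1) * discountedReturn γ r n i ≤ r i := by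
  have hsum := one_sub_mul_sum_pow_mul_le (i := i) hγ (n - i) (by rwa [Nat.add_sub_cancel' hi])
  rw [Nat.add_sub_cancel' hi] at hsum
  have : 0 ≤ γ ^ (n - i) * r n := mul_nonneg (pow_nonneg hγ _) hrn
  rw [discountedReturn]
  linarith

theorem discountedReturn_le_discountedReturn (hγ : 0 ≤ γ) (hr : ∀ k < n, r (k + 1) ≤ r k)
    (hrn : 0 ≤ r n) {j : ℕ} (hij : i ≤ j) (hj : j ≤ n) :
    discountedReturn γ r n i ≤ discountedReturn γ r n j := by
  induction j, hij using Nat.le_induction with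
  | base => rfl
  | succ j _ ih =>
    have hrec := discountedReturn_eq_of_lt (γ := γ) (r := r) (by omega : j < n)
    have hbound := sub_one_mul_discountedReturn_le hγ hr hrn hj
    linarith [ih (by omega)]

theorem discountedReturn_sub_ge (hγ : 0 ≤ γ) (hr : ∀ k < n, r (k + 1) ≤ r k)
    (hrn : 0 ≤ r n) {j : ℕ} (hij : i < j) (hj : j ≤ n) :
    r j ≤ γ * discountedReturn γ r n j - discountedReturn γ r n i := by
  obtain ⟨p, rfl⟩ : ∃ p, j = p + 1 := ⟨j - 1, by omega⟩
  have hrec := discountedReturn_eq_of_lt (γ := γ) (r := r) (by omega : p < n)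
  have hmono := discountedReturn_le_discountedReturn hγ hr hrn (by omega : i ≤ p) (by omega)
  linarith

end DiscountedReturn

theorem stmt_1_general (m n : ℕ) (γ : ℝ) (hγ0 : 0 < γ)
    (sW : EuclideanSpace ℝ (Fin m)) (s : ℕ → EuclideanSpace ℝ (Fin m))
    (himp : ∀ k < n, ‖s (k + 1) - sW‖ < ‖s k - sW‖)
    (G : ℕ → ℝ)
    (hG : ∀ i, G i = -∑ k ∈ Finset.range (n - i), γ ^ k * ‖s (i + 1 + k) - sW‖) :
    ∀ i j : ℕ, i < j → j ≤ n → γ * G j - G i ≥ ‖s j - sW‖ := by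
  have hGd : G = discountedReturn γ (fun t => ‖s t - sW‖) n := funext hG
  subst hGd
  intro i j hij hj
  exact discountedReturn_sub_ge (r := fun t => ‖s t - sW‖) hγ0.le (fun k hk => (himp k hk).le) (norm_nonneg _) hij hj

/-- For a distance-improving sequence `s 0, …, s n` with returns
`G i = -∑_{k=i+1}^{n} γ^{k-i-1} ‖s k - s_W‖`, one has `γ G j - G i ≥ ‖s j - s_W‖`
for all `i < j ≤ n`. -/
theorem stmt_1 (m n : ℕ) (γ : ℝ) (hγ0 : 0 < γ) (hγ1 : γ < 1)
    (sW : EuclideanSpace ℝ (Fin m)) (s : ℕ → EuclideanSpace ℝ (Fin m))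
    (himp : ∀ k < n, ‖s (k + 1) - sW‖ < ‖s k - sW‖)
    (G : ℕ → ℝ)
    (hG : ∀ i, G i = -∑ k ∈ Finset.range (n - i), γ ^ k * ‖s (i + 1 + k) - sW‖) :
    ∀ i j : ℕ, i < j → j ≤ n → γ * G j - G i ≥ ‖s j - sW‖ :=
  stmt_1_general m n γ hγ0 sW s himp G hG
end

section
/- Let γ ∈ (0,1), s_W ∈ ℝ^m, W ∈ ℝ^{m×d} a matrix, and consider linear dynamics f(s, a) = s + W·a. Let s_0, …, s_n ∈ ℝ^m be a distance-improving sequence (‖s_{k+1} − s_W‖ < ‖s_k − s_W‖ for all k < n) generated by actions a_0, …, a_{n−1} ∈ ℝ^d via s_{k+1} = s_k + W·a_k, and let G_i := −∑_{k=i+1}^{n} γ^{k−i−1}·‖s_k − s_W‖. Then for any indices i < j ≤ n, the accumulated action a := ∑_{k=i}^{j−1} a_k satisfies f(s_i, a) = s_j and is a shortcut at s_i, i.e. γ·G_j − G_i ≥ ‖f(s_i, a) − s_W‖. -/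
/-!
Writing `T i := -G i`, the returns satisfy the Bellman recursion `T i = ‖s_{i+1} - s_W‖ + γ T (i+1)`,
so `γ G j - G i = ‖s_{i+1} - s_W‖ + γ (T (i+1) - T j)`. Along a distance-improving trajectory `T` is
antitone: a later tail has fewer terms and each of them is no larger. Hence
`γ G j - G i ≥ ‖s_{i+1} - s_W‖ ≥ ‖s_j - s_W‖`, and by telescoping the dynamics the accumulated
action leads from `s_i` exactly to `s_j`.
-/

open Finset

def discountedTail (γ : ℝ) (e : ℕ → ℝ) (n i : ℕ) : ℝ :=
  ∑ k ∈ range (n - i), γ ^ k * e (i + 1 + k)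

theorem discountedTail_eq_add {γ : ℝ} {e : ℕ → ℝ} {n i : ℕ} (hi : i < n) :
    discountedTail γ e n i = e (i + 1) + γ * discountedTail γ e n (i + 1) := by
  rw [discountedTail, discountedTail, show n - i = n - (i + 1) + 1 by omega, sum_range_succ',
    mul_sum, add_comm]
  congr 1
  · simp
  · refine sum_congr rfl fun k _ => ?_
    rw [show i + 1 + (k + 1) = i + 1 + 1 + k by omega, pow_succ]
    ring

theorem discountedTail_antitone {γ : ℝ} {e : ℕ → ℝ} {n : ℕ} (hγ : 0 ≤ γ) (he : 0 ≤ e)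
    (hanti : AntitoneOn e (Set.Iic n)) : Antitone (discountedTail γ e n) := by
  intro i j hij
  calc discountedTail γ e n j
      ≤ ∑ k ∈ range (n - j), γ ^ k * e (i + 1 + k) := by
        refine sum_le_sum fun k hk => ?_
        have hk : k < n - j := mem_range.mp hk
        gcongr
        exact hanti (Set.mem_Iic.mpr (by omega)) (Set.mem_Iic.mpr (by omega)) (by omega)
    _ ≤ discountedTail γ e n i :=
        sum_le_sum_of_subset_of_nonneg (range_subset_range.mpr (by omega))
          fun k _ _ => mul_nonneg (pow_nonneg hγ k) (he _)

theorem add_map_sum_Ico_eq {E F H : Type*} [AddCommMonoid E] [AddCommGroup F]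
    [FunLike H E F] [AddMonoidHomClass H E F] (W : H) {s : ℕ → F} {a : ℕ → E} {n i j : ℕ}
    (hdyn : ∀ k < n, s (k + 1) = s k + W (a k)) (hij : i ≤ j) (hjn : j ≤ n) :
    s i + W (∑ k ∈ Ico i j, a k) = s j := by
  have hstep : ∀ k ∈ Ico i j, s (k + 1) - s k = W (a k) := fun k hk => by
    rw [hdyn k (by have := (mem_Ico.mp hk).2; omega), add_sub_cancel_left]
  rw [map_sum, ← sum_congr rfl hstep, sum_Ico_sub s hij, add_sub_cancel]

theorem stmt_2_general (m d n : ℕ) (γ : ℝ) (hγ0 : 0 < γ)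
    (sW : EuclideanSpace ℝ (Fin m))
    (W : EuclideanSpace ℝ (Fin d) →L[ℝ] EuclideanSpace ℝ (Fin m))
    (s : ℕ → EuclideanSpace ℝ (Fin m)) (a : ℕ → EuclideanSpace ℝ (Fin d))
    (hdyn : ∀ k < n, s (k + 1) = s k + W (a k))
    (himp : ∀ k < n, ‖s (k + 1) - sW‖ < ‖s k - sW‖)
    (G : ℕ → ℝ)
    (hG : ∀ i, G i = -∑ k ∈ Finset.range (n - i), γ ^ k * ‖s (i + 1 + k) - sW‖) :
    ∀ i j : ℕ, i < j → j ≤ n →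
      s i + W (∑ k ∈ Finset.Ico i j, a k) = s j ∧
      γ * G j - G i ≥ ‖(s i + W (∑ k ∈ Finset.Ico i j, a k)) - sW‖ := by
  intro i j hij hjn
  set e : ℕ → ℝ := fun k => ‖s k - sW‖
  have hdist : AntitoneOn e (Set.Iic n) := (strictAntiOn_Iic_of_succ_lt himp).antitoneOn
  have hreach := add_map_sum_Ico_eq W hdyn hij.le hjn
  refine ⟨hreach, ?_⟩
  have hGT : ∀ k, G k = -discountedTail γ e n k := hG
  have hTj : discountedTail γ e n j ≤ discountedTail γ e n (i + 1) :=
    discountedTail_antitone hγ0.le (fun _ => norm_nonneg _) hdist hij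
  have hej : e j ≤ e (i + 1) :=
    hdist (Set.mem_Iic.mpr (by omega)) (Set.mem_Iic.mpr hjn) hij
  rw [hreach, hGT i, hGT j, discountedTail_eq_add (i := i) (by omega)]
  change e j ≤ _
  linarith [mul_nonneg hγ0.le (sub_nonneg.mpr hTj)]

/-- For linear dynamics `f(s, a) = s + W a` and a distance-improving trajectory
generated by actions `a_k`, the accumulated action `a = ∑_{k=i}^{j-1} a_k` satisfies
`f(s_i, a) = s_j` and is a shortcut at `s_i`: `γ G_j - G_i ≥ ‖f(s_i, a) - s_W‖`. -/
theorem stmt_2 (m d n : ℕ) (γ : ℝ) (hγ0 : 0 < γ) (hγ1 : γ < 1)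
    (sW : EuclideanSpace ℝ (Fin m))
    (W : EuclideanSpace ℝ (Fin d) →L[ℝ] EuclideanSpace ℝ (Fin m))
    (s : ℕ → EuclideanSpace ℝ (Fin m)) (a : ℕ → EuclideanSpace ℝ (Fin d))
    (hdyn : ∀ k < n, s (k + 1) = s k + W (a k))
    (himp : ∀ k < n, ‖s (k + 1) - sW‖ < ‖s k - sW‖)
    (G : ℕ → ℝ)
    (hG : ∀ i, G i = -∑ k ∈ Finset.range (n - i), γ ^ k * ‖s (i + 1 + k) - sW‖) :
    ∀ i j : ℕ, i < j → j ≤ n →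
      s i + W (∑ k ∈ Finset.Ico i j, a k) = s j ∧
      γ * G j - G i ≥ ‖(s i + W (∑ k ∈ Finset.Ico i j, a k)) - sW‖ :=
  stmt_2_general m d n γ hγ0 sW W s a hdyn himp G hG
end

section
/- Let g : ℝ^m → ℝ^{m×d} be a matrix-valued function whose operator norm is bounded, say ‖g(s)‖ ≤ M for all s ∈ ℝ^m, and define f(s, a) := s + g(s)·a. Then f has linear placement errors with constant 2M: for every s_0 ∈ ℝ^m and every action chain a_0, …, a_{k−1} ∈ ℝ^d generating states s_{i+1} := f(s_i, a_i), one has ‖f(s_0, ∑_{i=0}^{k−1} a_i) − s_k‖ ≤ 2M·∑_{i=0}^{k−1} ‖a_i‖. -/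
/-! Telescoping the chain gives `s₀ + g(s₀)(∑ aᵢ) - s_k = ∑ (g(s₀) - g(sᵢ)) aᵢ`, and each summand
has norm at most `(‖g(s₀)‖ + ‖g(sᵢ)‖) ‖aᵢ‖ ≤ 2M ‖aᵢ‖`. -/

section PlacementError

variable {𝕜 X E F : Type*} [NontriviallyNormedField 𝕜]
  [NormedAddCommGroup E] [NormedSpace 𝕜 E] [NormedAddCommGroup F] [NormedSpace 𝕜 F]

theorem eq_add_sum_of_chain {G : Type*} [AddCommGroup G] {k : ℕ} {s v : ℕ → G}
    (hchain : ∀ i < k, s (i + 1) = s i + v i) :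
    s k = s 0 + ∑ i ∈ Finset.range k, v i := by
  rw [← sub_eq_iff_eq_add', ← Finset.sum_range_sub]
  refine Finset.sum_congr rfl fun i hi => ?_
  rw [hchain i (Finset.mem_range.mp hi), add_sub_cancel_left]

theorem linear_placement_error_eq (g : F → E →L[𝕜] F) {k : ℕ} {a : ℕ → E} {s : ℕ → F}
    (hchain : ∀ i < k, s (i + 1) = s i + g (s i) (a i)) :
    s 0 + g (s 0) (∑ i ∈ Finset.range k, a i) - s k
      = ∑ i ∈ Finset.range k, (g (s 0) - g (s i)) (a i) := by
  simp only [eq_add_sum_of_chain hchain, map_sum, sub_apply,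
    Finset.sum_sub_distrib, add_sub_add_left_eq_sub]

theorem norm_sub_apply_le_of_opNorm_le {g : X → E →L[𝕜] F} {M : ℝ} (hM : ∀ x, ‖g x‖ ≤ M)
    (x y : X) (v : E) : ‖(g x - g y) v‖ ≤ 2 * M * ‖v‖ :=
  calc ‖(g x - g y) v‖ ≤ ‖g x - g y‖ * ‖v‖ := (g x - g y).le_opNorm v
    _ ≤ (‖g x‖ + ‖g y‖) * ‖v‖ := by gcongr; exact norm_sub_le _ _
    _ ≤ 2 * M * ‖v‖ := by gcongr; linarith [hM x, hM y]

end PlacementError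

/-- If `f(s, a) = s + g(s) a` with `‖g(s)‖ ≤ M` (operator norm) for all `s`,
then `f` has linear placement errors with constant `2 M`. -/
theorem stmt_3 (m d : ℕ)
    (g : EuclideanSpace ℝ (Fin m) → (EuclideanSpace ℝ (Fin d) →L[ℝ] EuclideanSpace ℝ (Fin m)))
    (M : ℝ) (hM : ∀ s, ‖g s‖ ≤ M)
    (k : ℕ) (a : ℕ → EuclideanSpace ℝ (Fin d)) (s : ℕ → EuclideanSpace ℝ (Fin m))
    (hchain : ∀ i < k, s (i + 1) = s i + g (s i) (a i)) :
    ‖s 0 + g (s 0) (∑ i ∈ Finset.range k, a i) - s k‖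
      ≤ 2 * M * ∑ i ∈ Finset.range k, ‖a i‖ := by
  rw [linear_placement_error_eq g hchain, Finset.mul_sum]
  exact (norm_sum_le _ _).trans
    (Finset.sum_le_sum fun i _ => norm_sub_apply_le_of_opNorm_le hM (s 0) (s i) (a i))
end

section
/- Let f : ℝ^m × ℝ^d → ℝ^m with f(s, 0) = s, and suppose there exists a constant L ≥ 0 such that for all s ∈ ℝ^m and all a, a' ∈ ℝ^d, ‖f(s, a + a') − f(f(s, a), a')‖ ≤ L·‖a‖. Then f has linear placement errors with constant L: for every s_0 ∈ ℝ^m and every action chain a_0, …, a_{k−1} generating states s_{i+1} := f(s_i, a_i), one has ‖f(s_0, ∑_{i=0}^{k−1} a_i) − s_k‖ ≤ L·∑_{i=0}^{k−1} ‖a_i‖. -/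
/-! Induction on the length of the chain, peeling off the first action: the regrouping bound
moves `a₀` out of the total action at cost `L ‖a₀‖`, which leaves the total action of the
shorter chain started at `s₁ = f s₀ a₀`. -/

open Finset

section PlacementErrors

variable {X A : Type*} [PseudoMetricSpace X] [SeminormedAddCommGroup A]

def HasLinearPlacementErrors (f : X → A → X) (L : ℝ) : Prop :=
  ∀ (k : ℕ) (a : ℕ → A) (s : ℕ → X), (∀ i < k, s (i + 1) = f (s i) (a i)) →
    dist (f (s 0) (∑ i ∈ range k, a i)) (s k) ≤ L * ∑ i ∈ range k, ‖a i‖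

theorem hasLinearPlacementErrors_of_dist_regroup_le {f : X → A → X} {L : ℝ}
    (hf0 : ∀ s, f s 0 = s) (hreg : ∀ s a a', dist (f s (a + a')) (f (f s a) a') ≤ L * ‖a‖) :
    HasLinearPlacementErrors f L := by
  intro k
  induction k with
  | zero => simp [hf0]
  | succ k ih =>
    intro a s hchain
    set rest := ∑ i ∈ range k, a (i + 1)
    have htail : dist (f (s 1) rest) (s (k + 1)) ≤ L * ∑ i ∈ range k, ‖a (i + 1)‖ :=
      ih (fun i ↦ a (i + 1)) (fun i ↦ s (i + 1)) fun i hi ↦ hchain (i + 1) (by omega)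
    rw [hchain 0 k.succ_pos] at htail
    rw [sum_range_succ', sum_range_succ', add_comm (∑ i ∈ range k, a (i + 1))]
    calc dist (f (s 0) (a 0 + rest)) (s (k + 1))
        ≤ dist (f (s 0) (a 0 + rest)) (f (f (s 0) (a 0)) rest)
          + dist (f (f (s 0) (a 0)) rest) (s (k + 1)) := dist_triangle _ _ _
      _ ≤ L * ‖a 0‖ + L * ∑ i ∈ range k, ‖a (i + 1)‖ := add_le_add (hreg _ _ _) htail
      _ = L * (∑ i ∈ range k, ‖a (i + 1)‖ + ‖a 0‖) := by ring

end PlacementErrors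

theorem stmt_7_general (m d : ℕ)
    (f : EuclideanSpace ℝ (Fin m) → EuclideanSpace ℝ (Fin d) → EuclideanSpace ℝ (Fin m))
    (hf0 : ∀ s, f s 0 = s)
    (L : ℝ)
    (hreg : ∀ s a a', ‖f s (a + a') - f (f s a) a'‖ ≤ L * ‖a‖)
    (k : ℕ) (a : ℕ → EuclideanSpace ℝ (Fin d)) (s : ℕ → EuclideanSpace ℝ (Fin m))
    (hchain : ∀ i < k, s (i + 1) = f (s i) (a i)) :
    ‖f (s 0) (∑ i ∈ Finset.range k, a i) - s k‖ ≤ L * ∑ i ∈ Finset.range k, ‖a i‖ := by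
  simp only [← dist_eq_norm] at hreg ⊢
  exact hasLinearPlacementErrors_of_dist_regroup_le hf0 hreg k a s hchain

/-- If `f(s, 0) = s` and the one-step regrouping bound
`‖f(s, a + a') - f(f(s, a), a')‖ ≤ L ‖a‖` holds for all `s, a, a'`, then `f` has
linear placement errors with constant `L`. -/
theorem stmt_7 (m d : ℕ)
    (f : EuclideanSpace ℝ (Fin m) → EuclideanSpace ℝ (Fin d) → EuclideanSpace ℝ (Fin m))
    (hf0 : ∀ s, f s 0 = s)
    (L : ℝ) (hL : 0 ≤ L)
    (hreg : ∀ s a a', ‖f s (a + a') - f (f s a) a'‖ ≤ L * ‖a‖)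
    (k : ℕ) (a : ℕ → EuclideanSpace ℝ (Fin d)) (s : ℕ → EuclideanSpace ℝ (Fin m))
    (hchain : ∀ i < k, s (i + 1) = f (s i) (a i)) :
    ‖f (s 0) (∑ i ∈ Finset.range k, a i) - s k‖ ≤ L * ∑ i ∈ Finset.range k, ‖a i‖ :=
  stmt_7_general m d f hf0 L hreg k a s hchain
end

section
/- On ℝ, define f(s, a) := s + sign(s)·a, where sign(s) = 1 if s > 0, sign(s) = −1 if s < 0, and sign(0) = 0. Then: (i) f has linear placement errors with constant 2, i.e. for every s_0 ∈ ℝ and every action chain a_0, …, a_{k−1} ∈ ℝ generating states s_{i+1} := f(s_i, a_i), one has |f(s_0, ∑_{i<k} a_i) − s_k| ≤ 2·∑_{i<k} |a_i|; but (ii) there is no constant L ≥ 0 such that |f(s, a + a') − f(f(s, a), a')| ≤ L·|a| for all s, a, a' ∈ ℝ. -/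
/-- The distortion `f(s, a) = s + sign(s) · a` on `ℝ`
(`Real.sign s` is `1` for `s > 0`, `-1` for `s < 0`, and `0` for `s = 0`). -/
noncomputable def fSign (s a : ℝ) : ℝ := s + Real.sign s * a

/-! A map whose single steps move the state by at most the size of the action has linear
placement errors with constant `2`: both `f(s₀, ∑ aᵢ)` and the end `s_k` of the chain lie
within `∑ |aᵢ|` of `s₀`. For `f(s, a) = s + sign(s) a` one-step regrouping fails at `s = 1`,
`a = -1`: the first step lands on the fixed point `0`, so `f(f(1, -1), a') = 0` while
`f(1, -1 + a') = a'`. -/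

theorem norm_sub_chain_start_le_sum {E : Type*} [SeminormedAddCommGroup E] (f : E → E → E)
    (hf : ∀ s a, ‖f s a - s‖ ≤ ‖a‖) {k : ℕ} {a s : ℕ → E}
    (hs : ∀ i < k, s (i + 1) = f (s i) (a i)) :
    ‖s k - s 0‖ ≤ ∑ i ∈ Finset.range k, ‖a i‖ := by
  rw [← dist_eq_norm, dist_comm]
  refine dist_le_range_sum_of_dist_le k fun {i} hi => ?_
  rw [dist_comm, dist_eq_norm, hs i hi]
  exact hf _ _

theorem norm_sub_chain_le_two_mul_sum {E : Type*} [SeminormedAddCommGroup E] (f : E → E → E)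
    (hf : ∀ s a, ‖f s a - s‖ ≤ ‖a‖) {k : ℕ} {a s : ℕ → E}
    (hs : ∀ i < k, s (i + 1) = f (s i) (a i)) :
    ‖f (s 0) (∑ i ∈ Finset.range k, a i) - s k‖ ≤
      2 * ∑ i ∈ Finset.range k, ‖a i‖ := by
  have hsum := hf (s 0) (∑ i ∈ Finset.range k, a i)
  have hchain := norm_sub_chain_start_le_sum f hf hs
  calc ‖f (s 0) (∑ i ∈ Finset.range k, a i) - s k‖
      ≤ ‖f (s 0) (∑ i ∈ Finset.range k, a i) - s 0‖ + ‖s k - s 0‖ := by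
        rw [norm_sub_rev (s k)]
        exact norm_sub_le_norm_sub_add_norm_sub _ _ _
    _ ≤ ‖∑ i ∈ Finset.range k, a i‖ + ∑ i ∈ Finset.range k, ‖a i‖ :=
        add_le_add hsum hchain
    _ ≤ 2 * ∑ i ∈ Finset.range k, ‖a i‖ := by
      linarith [norm_sum_le (Finset.range k) a]

theorem Real.abs_sign_le_one (s : ℝ) : |Real.sign s| ≤ 1 := by
  rcases Real.sign_apply_eq s with h | h | h <;> simp [h]

theorem abs_fSign_sub_le (s a : ℝ) : |fSign s a - s| ≤ |a| := by
  calc |fSign s a - s| = |Real.sign s| * |a| := by simp [fSign, abs_mul]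
    _ ≤ |a| := mul_le_of_le_one_left (abs_nonneg a) (Real.abs_sign_le_one s)

theorem fSign_one_neg_one_add (b : ℝ) :
    fSign 1 (-1 + b) - fSign (fSign 1 (-1)) b = b := by
  simp [fSign, Real.sign_one]

/-- `f(s, a) = s + sign(s) a` has linear placement errors with constant `2`,
but satisfies no one-step regrouping bound `|f(s, a + a') - f(f(s, a), a')| ≤ L |a|`. -/
theorem stmt_8 :
    (∀ (k : ℕ) (a s : ℕ → ℝ),
      (∀ i < k, s (i + 1) = fSign (s i) (a i)) →
      |fSign (s 0) (∑ i ∈ Finset.range k, a i) - s k| ≤ 2 * ∑ i ∈ Finset.range k, |a i|)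
    ∧ ¬∃ L : ℝ, 0 ≤ L ∧
        ∀ s a a' : ℝ, |fSign s (a + a') - fSign (fSign s a) a'| ≤ L * |a| := by
  refine ⟨fun k a s hs => ?_, ?_⟩
  · simpa only [Real.norm_eq_abs] using
      norm_sub_chain_le_two_mul_sum fSign abs_fSign_sub_le hs
  · rintro ⟨L, hL, hregroup⟩
    have h := hregroup 1 (-1) (L + 1)
    rw [fSign_one_neg_one_add, abs_neg, abs_one, mul_one, abs_of_nonneg (by linarith)] at h
    linarith
end

section
/- Fix s_W ∈ ℝ^m and constants 0 < C < λ, and on ℝ^m with actions in ℝ^m define f(s, a) := s + clip_{C,λ}(‖s − s_W‖)·a, where clip_{C,λ}(x) := min(max(x, C), λ). Then f has linear placement errors with constant 2λ: for every s_0 ∈ ℝ^m and every action chain a_0, …, a_{k−1} generating states s_{i+1} := f(s_i, a_i), one has ‖f(s_0, ∑_{i<k} a_i) − s_k‖ ≤ 2λ·∑_{i<k} ‖a_i‖. -/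
/-!
Unrolling the chain gives `s k = s 0 + ∑ c(sᵢ) • aᵢ`, where `c` is the clipped scale, while the
single action yields `s 0 + c(s 0) • ∑ aᵢ`. The placement error is therefore
`∑ (c(s 0) - c(sᵢ)) • aᵢ`, and since `c` takes values in `[C, λ]` with `C > 0`, each coefficient
has absolute value at most `λ - C ≤ 2λ`.
-/

open Finset

section StateDependentScaling

variable {R E : Type*} {k : ℕ} {a s : ℕ → E}

theorem eq_add_sum_smul_of_chain [AddCommMonoid E] [SMul R E] {c : E → R}
    (hchain : ∀ i < k, s (i + 1) = s i + c (s i) • a i) :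
    ∀ n ≤ k, s n = s 0 + ∑ i ∈ range n, c (s i) • a i
  | 0, _ => by simp
  | n + 1, hn => by
    rw [sum_range_succ, ← add_assoc, ← eq_add_sum_smul_of_chain hchain n (by omega), hchain n hn]

theorem placement_error_eq_sum [Ring R] [AddCommGroup E] [Module R E] {c : E → R}
    (hchain : ∀ i < k, s (i + 1) = s i + c (s i) • a i) :
    s 0 + c (s 0) • ∑ i ∈ range k, a i - s k = ∑ i ∈ range k, (c (s 0) - c (s i)) • a i := by
  simp only [eq_add_sum_smul_of_chain hchain k le_rfl, add_sub_add_left_eq_sub, smul_sum,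
    ← sum_sub_distrib, sub_smul]

theorem norm_placement_error_le [NormedAddCommGroup E] [NormedSpace ℝ E] {c : E → ℝ}
    {lo hi : ℝ} (hc : ∀ t, c t ∈ Set.Icc lo hi)
    (hchain : ∀ i < k, s (i + 1) = s i + c (s i) • a i) :
    ‖s 0 + c (s 0) • ∑ i ∈ range k, a i - s k‖ ≤ (hi - lo) * ∑ i ∈ range k, ‖a i‖ := by
  rw [placement_error_eq_sum hchain, mul_sum]
  refine (norm_sum_le _ _).trans (sum_le_sum fun i _ => ?_)
  rw [norm_smul, Real.norm_eq_abs]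
  gcongr
  exact abs_sub_le_of_le_of_le (hc _).1 (hc _).2 (hc _).1 (hc _).2

end StateDependentScaling

theorem min_max_mem_Icc {C lam : ℝ} (h : C ≤ lam) (x : ℝ) : min (max x C) lam ∈ Set.Icc C lam :=
  ⟨le_min (le_max_right x C) h, min_le_right _ _⟩

/-- The scaling distortion `f(s, a) = s + clip_{C,λ}(‖s - s_W‖) · a`
with `clip_{C,λ}(x) = min (max x C) λ` and `0 < C < λ` has linear placement errors
with constant `2 λ`. -/
theorem stmt_9 (m : ℕ) (sW : EuclideanSpace ℝ (Fin m)) (C lam : ℝ)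
    (hC : 0 < C) (hClam : C < lam)
    (f : EuclideanSpace ℝ (Fin m) → EuclideanSpace ℝ (Fin m) → EuclideanSpace ℝ (Fin m))
    (hf : ∀ s a, f s a = s + (min (max ‖s - sW‖ C) lam) • a)
    (k : ℕ) (a s : ℕ → EuclideanSpace ℝ (Fin m))
    (hchain : ∀ i < k, s (i + 1) = f (s i) (a i)) :
    ‖f (s 0) (∑ i ∈ Finset.range k, a i) - s k‖
      ≤ 2 * lam * ∑ i ∈ Finset.range k, ‖a i‖ := by
  simp only [hf] at hchain ⊢
  calc _ ≤ (lam - C) * ∑ i ∈ range k, ‖a i‖ :=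
        norm_placement_error_le (c := fun t => min (max ‖t - sW‖ C) lam)
          (fun t => min_max_mem_Icc hClam.le _) hchain
    _ ≤ 2 * lam * ∑ i ∈ range k, ‖a i‖ := by
        gcongr
        linarith
end

section
/- Let g : ℝ^m → ℝ^{m×m} be a function assigning to each state an orthogonal matrix (for instance, a region-dependent rotation as in f_regrot), and define f(s, a) := s + g(s)·a on ℝ^m. Then f has linear placement errors with constant 2: for every s_0 ∈ ℝ^m and every action chain a_0, …, a_{k−1} generating states s_{i+1} := f(s_i, a_i), one has ‖f(s_0, ∑_{i<k} a_i) − s_k‖ ≤ 2·∑_{i<k} ‖a_i‖. -/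
/-!
Along the chain, `s k - s 0 = ∑ g (s i) (a i)`, whereas the direct move adds `g (s 0) (∑ a i)`.
Both displacements have norm at most `∑ ‖a i‖` because every `g s` preserves norms, so their
difference has norm at most twice that.
-/

open Finset

lemma sub_eq_sum_range_of_forall_lt_succ_eq_add {G : Type*} [AddCommGroup G] {k : ℕ}
    {s d : ℕ → G} (h : ∀ i < k, s (i + 1) = s i + d i) :
    s k - s 0 = ∑ i ∈ range k, d i := by
  rw [← sum_range_sub]
  refine sum_congr rfl fun i hi => ?_
  rw [h i (mem_range.mp hi), add_sub_cancel_left]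

theorem norm_add_apply_sum_sub_le_two_mul {E : Type*} [SeminormedAddCommGroup E]
    (g : E → E → E) (hg : ∀ s x, ‖g s x‖ ≤ ‖x‖) (k : ℕ) (a s : ℕ → E)
    (hchain : ∀ i < k, s (i + 1) = s i + g (s i) (a i)) :
    ‖s 0 + g (s 0) (∑ i ∈ range k, a i) - s k‖ ≤ 2 * ∑ i ∈ range k, ‖a i‖ := by
  have hsk : s 0 + g (s 0) (∑ i ∈ range k, a i) - s k
      = g (s 0) (∑ i ∈ range k, a i) - ∑ i ∈ range k, g (s i) (a i) := by
    rw [← sub_eq_sum_range_of_forall_lt_succ_eq_add hchain]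
    abel
  rw [hsk]
  calc ‖g (s 0) (∑ i ∈ range k, a i) - ∑ i ∈ range k, g (s i) (a i)‖
      ≤ ‖g (s 0) (∑ i ∈ range k, a i)‖ + ∑ i ∈ range k, ‖g (s i) (a i)‖ :=
        (norm_sub_le _ _).trans (add_le_add_right (norm_sum_le _ _) _)
    _ ≤ ∑ i ∈ range k, ‖a i‖ + ∑ i ∈ range k, ‖a i‖ :=
        add_le_add ((hg _ _).trans (norm_sum_le _ _)) (sum_le_sum fun i _ => hg _ _)
    _ = 2 * ∑ i ∈ range k, ‖a i‖ := (two_mul _).symm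

/-- If `g` assigns to each state an orthogonal (norm-preserving linear)
matrix, the distortion `f(s, a) = s + g(s) a` has linear placement errors with
constant `2`. -/
theorem stmt_10 (m : ℕ)
    (g : EuclideanSpace ℝ (Fin m) → (EuclideanSpace ℝ (Fin m) →L[ℝ] EuclideanSpace ℝ (Fin m)))
    (hg : ∀ s x, ‖g s x‖ = ‖x‖)
    (k : ℕ) (a s : ℕ → EuclideanSpace ℝ (Fin m))
    (hchain : ∀ i < k, s (i + 1) = s i + g (s i) (a i)) :
    ‖s 0 + g (s 0) (∑ i ∈ Finset.range k, a i) - s k‖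
      ≤ 2 * ∑ i ∈ Finset.range k, ‖a i‖ :=
  norm_add_apply_sum_sub_le_two_mul (fun s => g s) (fun s x => (hg s x).le) k a s hchain
end

section
/- On ℝ^d, fix σ ≥ 0 and a scalar w with 0 ≤ w ≤ σ, and define f(s, a) := s + a + w·(sin(s) ⊙ cos(s))·‖a‖, where sin and cos are applied componentwise and ⊙ denotes the componentwise product. Then f has linear placement errors with constant σ·√d: for every s_0 ∈ ℝ^d and every action chain a_0, …, a_{k−1} generating states s_{i+1} := f(s_i, a_i), one has ‖f(s_0, ∑_{i<k} a_i) − s_k‖ ≤ σ·√d·∑_{i<k} ‖a_i‖. -/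
/-!
Write `f s a = s + a + ‖a‖ • g s` with `g s = w • (sin s ⊙ cos s)`, so that `‖g‖ ≤ w √d / 2`
because `|sin x cos x| = |sin 2x| / 2 ≤ 1 / 2`. Telescoping the chain gives
`s_k = s_0 + ∑ a_i + ∑ ‖a_i‖ • g s_i`, hence
`f s_0 (∑ a_i) - s_k = ‖∑ a_i‖ • g s_0 - ∑ ‖a_i‖ • g s_i`, whose norm is at most
`2 · sup ‖g‖ · ∑ ‖a_i‖`.
-/

open Finset

lemma Real.abs_sin_mul_cos_le_half (x : ℝ) : |Real.sin x * Real.cos x| ≤ 1 / 2 := by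
  have h : Real.sin x * Real.cos x = Real.sin (2 * x) / 2 := by rw [Real.sin_two_mul]; ring
  rw [h, abs_div, abs_two]
  gcongr
  exact Real.abs_sin_le_one _

lemma EuclideanSpace.norm_le_sqrt_card_mul {ι : Type*} [Fintype ι] (x : EuclideanSpace ℝ ι)
    {c : ℝ} (hx : ∀ i, ‖x i‖ ≤ c) : ‖x‖ ≤ √(Fintype.card ι) * c := by
  rcases isEmpty_or_nonempty ι with hι | ⟨⟨i₀⟩⟩
  · simp [Subsingleton.elim x 0]
  have hc : 0 ≤ c := (norm_nonneg _).trans (hx i₀)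
  calc ‖x‖ = √(∑ i, ‖x i‖ ^ 2) := EuclideanSpace.norm_eq x
    _ ≤ √(∑ _i : ι, c ^ 2) := by gcongr with i; exact hx i
    _ = √(Fintype.card ι) * c := by
      rw [sum_const, card_univ, nsmul_eq_mul, Real.sqrt_mul (Nat.cast_nonneg _), Real.sqrt_sq hc]

lemma EuclideanSpace.norm_sin_mul_cos_le (d : ℕ) (x : EuclideanSpace ℝ (Fin d)) :
    ‖(WithLp.equiv 2 (Fin d → ℝ)).symm (fun i => Real.sin (x i) * Real.cos (x i))‖
      ≤ √d * (1 / 2) := by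
  refine (EuclideanSpace.norm_le_sqrt_card_mul _ (c := 1 / 2) fun i => ?_).trans_eq
    (by rw [Fintype.card_fin])
  simpa using Real.abs_sin_mul_cos_le_half (x i)

section PlacementError

variable {E : Type*} [SeminormedAddCommGroup E] [NormedSpace ℝ E]

lemma chain_eq_add_sum (g : E → E) (f : E → E → E) (hf : ∀ s a, f s a = s + a + ‖a‖ • g s)
    (k : ℕ) (a s : ℕ → E) (hchain : ∀ i < k, s (i + 1) = f (s i) (a i)) :
    s k = s 0 + ∑ i ∈ range k, a i + ∑ i ∈ range k, ‖a i‖ • g (s i) := by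
  have hsteps : s k - s 0 = ∑ i ∈ range k, (a i + ‖a i‖ • g (s i)) := by
    rw [← sum_range_sub]
    refine sum_congr rfl fun i hi => ?_
    rw [hchain i (mem_range.1 hi), hf]
    abel
  rw [add_assoc, ← sum_add_distrib, ← hsteps]
  abel

theorem norm_placement_error_le_s11 (g : E → E) {C : ℝ} (hg : ∀ x, ‖g x‖ ≤ C)
    (f : E → E → E) (hf : ∀ s a, f s a = s + a + ‖a‖ • g s)
    (k : ℕ) (a s : ℕ → E) (hchain : ∀ i < k, s (i + 1) = f (s i) (a i)) :
    ‖f (s 0) (∑ i ∈ range k, a i) - s k‖ ≤ 2 * C * ∑ i ∈ range k, ‖a i‖ := by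
  have herr : f (s 0) (∑ i ∈ range k, a i) - s k
      = ‖∑ i ∈ range k, a i‖ • g (s 0) - ∑ i ∈ range k, ‖a i‖ • g (s i) := by
    rw [hf, chain_eq_add_sum g f hf k a s hchain]
    abel
  have hfirst : ‖‖∑ i ∈ range k, a i‖ • g (s 0)‖ ≤ C * ∑ i ∈ range k, ‖a i‖ := by
    rw [norm_smul, norm_norm, mul_comm]
    exact mul_le_mul (hg _) (norm_sum_le _ _) (norm_nonneg _) ((norm_nonneg _).trans (hg (s 0)))
  have hrest : ‖∑ i ∈ range k, ‖a i‖ • g (s i)‖ ≤ C * ∑ i ∈ range k, ‖a i‖ := by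
    rw [mul_sum]
    refine (norm_sum_le _ _).trans (sum_le_sum fun i _ => ?_)
    rw [norm_smul, norm_norm, mul_comm]
    exact mul_le_mul_of_nonneg_right (hg _) (norm_nonneg _)
  rw [herr]
  linarith [norm_sub_le (‖∑ i ∈ range k, a i‖ • g (s 0)) (∑ i ∈ range k, ‖a i‖ • g (s i))]

end PlacementError

theorem stmt_11_general (d : ℕ) (σ w : ℝ) (hw0 : 0 ≤ w) (hwσ : w ≤ σ)
    (f : EuclideanSpace ℝ (Fin d) → EuclideanSpace ℝ (Fin d) → EuclideanSpace ℝ (Fin d))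
    (hf : ∀ s a, f s a = s + a +
      (w * ‖a‖) • (WithLp.equiv 2 (Fin d → ℝ)).symm (fun i => Real.sin (s i) * Real.cos (s i)))
    (k : ℕ) (a s : ℕ → EuclideanSpace ℝ (Fin d))
    (hchain : ∀ i < k, s (i + 1) = f (s i) (a i)) :
    ‖f (s 0) (∑ i ∈ Finset.range k, a i) - s k‖
      ≤ σ * Real.sqrt d * ∑ i ∈ Finset.range k, ‖a i‖ := by
  set g : EuclideanSpace ℝ (Fin d) → EuclideanSpace ℝ (Fin d) := fun x =>
    w • (WithLp.equiv 2 (Fin d → ℝ)).symm (fun i => Real.sin (x i) * Real.cos (x i))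
  have hg : ∀ x, ‖g x‖ ≤ w * (√d * (1 / 2)) := fun x => by
    rw [norm_smul, Real.norm_of_nonneg hw0]
    exact mul_le_mul_of_nonneg_left (EuclideanSpace.norm_sin_mul_cos_le d x) hw0
  have hf' : ∀ s a, f s a = s + a + ‖a‖ • g s := fun s a => by
    rw [hf, mul_comm, mul_smul]
  calc ‖f (s 0) (∑ i ∈ range k, a i) - s k‖
      ≤ 2 * (w * (√d * (1 / 2))) * ∑ i ∈ range k, ‖a i‖ :=
        norm_placement_error_le_s11 g hg f hf' k a s hchain
    _ = w * √d * ∑ i ∈ range k, ‖a i‖ := by ring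
    _ ≤ σ * √d * ∑ i ∈ range k, ‖a i‖ := by gcongr

/-- The sinusoidal distortion
`f(s, a) = s + a + w · (sin(s) ⊙ cos(s)) · ‖a‖` on `ℝ^d` with `0 ≤ w ≤ σ`
has linear placement errors with constant `σ √d`. -/
theorem stmt_11 (d : ℕ) (σ w : ℝ) (hσ : 0 ≤ σ) (hw0 : 0 ≤ w) (hwσ : w ≤ σ)
    (f : EuclideanSpace ℝ (Fin d) → EuclideanSpace ℝ (Fin d) → EuclideanSpace ℝ (Fin d))
    (hf : ∀ s a, f s a = s + a +
      (w * ‖a‖) • (WithLp.equiv 2 (Fin d → ℝ)).symm (fun i => Real.sin (s i) * Real.cos (s i)))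
    (k : ℕ) (a s : ℕ → EuclideanSpace ℝ (Fin d))
    (hchain : ∀ i < k, s (i + 1) = f (s i) (a i)) :
    ‖f (s 0) (∑ i ∈ Finset.range k, a i) - s k‖
      ≤ σ * Real.sqrt d * ∑ i ∈ Finset.range k, ‖a i‖ :=
  stmt_11_general d σ w hw0 hwσ f hf k a s hchain
end

section
/- Let γ ∈ (0,1) and s_W ∈ ℝ^m. Let s_0, …, s_n ∈ ℝ^m be a trajectory with returns G_i := −∑_{k=i+1}^{n} γ^{k−i−1}·‖s_k − s_W‖, let 0 ≤ t ≤ n, and let s' ∈ ℝ^m be a state with a continuation trajectory u_0 = s', u_1, …, u_p ∈ ℝ^m of return V' := −∑_{k=1}^{p} γ^{k−1}·‖u_k − s_W‖. If the shortcut condition γ·V' − ‖s' − s_W‖ ≥ G_t holds, then the return of the augmented trajectory that follows s_0, …, s_t, then moves to s' and follows u_1, …, u_p, namely −∑_{k=1}^{t} γ^{k−1}·‖s_k − s_W‖ − γ^t·‖s' − s_W‖ + γ^{t+1}·V', is at least G_0. -/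
/-!
The return satisfies the Bellman identity `G 0 = -(first t discounted costs) + γ ^ t * G t`.
The shortcut condition bounds `G t` by `γ * V' - ‖s' - sW‖`, and multiplying by `γ ^ t ≥ 0`
turns that bound into the claim.
-/

open Finset

theorem sum_range_pow_mul_eq_add_pow_mul {R : Type*} [CommSemiring R] (γ : R) (f : ℕ → R)
    {t n : ℕ} (ht : t ≤ n) :
    ∑ k ∈ range n, γ ^ k * f k =
      ∑ k ∈ range t, γ ^ k * f k + γ ^ t * ∑ k ∈ range (n - t), γ ^ k * f (t + k) := by
  obtain ⟨d, rfl⟩ := Nat.exists_eq_add_of_le ht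
  simp only [sum_range_add, Nat.add_sub_cancel_left, mul_sum, pow_add, mul_assoc]

theorem stmt_14_general (m n t : ℕ) (γ : ℝ) (hγ0 : 0 < γ)
    (sW : EuclideanSpace ℝ (Fin m))
    (s : ℕ → EuclideanSpace ℝ (Fin m))
    (G : ℕ → ℝ)
    (hG : ∀ i, G i = -∑ k ∈ Finset.range (n - i), γ ^ k * ‖s (i + 1 + k) - sW‖)
    (ht : t ≤ n)
    (s' : EuclideanSpace ℝ (Fin m))
    (V' : ℝ)
    (hshortcut : γ * V' - ‖s' - sW‖ ≥ G t) :
    (-∑ k ∈ Finset.range t, γ ^ k * ‖s (k + 1) - sW‖) - γ ^ t * ‖s' - sW‖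
        + γ ^ (t + 1) * V' ≥ G 0 := by
  have hsplit : G 0 = -∑ k ∈ range t, γ ^ k * ‖s (k + 1) - sW‖ + γ ^ t * G t := by
    rw [hG 0, hG t, Nat.sub_zero]
    simp only [zero_add, add_comm 1, add_right_comm t 1]
    rw [sum_range_pow_mul_eq_add_pow_mul γ (fun k ↦ ‖s (k + 1) - sW‖) ht]
    ring
  have hscaled : γ ^ t * G t ≤ γ ^ t * (γ * V' - ‖s' - sW‖) :=
    mul_le_mul_of_nonneg_left hshortcut (pow_nonneg hγ0.le t)
  rw [hsplit, pow_succ']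
  linarith [hscaled]

/-- single-augmentation step of policy improvement: if the shortcut
condition `γ V' - ‖s' - s_W‖ ≥ G_t` holds, then the return of the trajectory that
follows `s_0, …, s_t`, jumps to `s' = u_0`, and continues with `u_1, …, u_p`
is at least `G_0`. -/
theorem stmt_14 (m n p t : ℕ) (γ : ℝ) (hγ0 : 0 < γ) (hγ1 : γ < 1)
    (sW : EuclideanSpace ℝ (Fin m))
    (s : ℕ → EuclideanSpace ℝ (Fin m))
    (G : ℕ → ℝ)
    (hG : ∀ i, G i = -∑ k ∈ Finset.range (n - i), γ ^ k * ‖s (i + 1 + k) - sW‖)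
    (ht : t ≤ n)
    (s' : EuclideanSpace ℝ (Fin m)) (u : ℕ → EuclideanSpace ℝ (Fin m))
    (hu0 : u 0 = s')
    (V' : ℝ) (hV' : V' = -∑ k ∈ Finset.range p, γ ^ k * ‖u (k + 1) - sW‖)
    (hshortcut : γ * V' - ‖s' - sW‖ ≥ G t) :
    (-∑ k ∈ Finset.range t, γ ^ k * ‖s (k + 1) - sW‖) - γ ^ t * ‖s' - sW‖
        + γ ^ (t + 1) * V' ≥ G 0 :=
  stmt_14_general m n t γ hγ0 sW s G hG ht s' V' hshortcut
end
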